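/- arXiv:2210.03438 — 2 statements merged into one kernel-verified Lean document; each statement's English description precedes it below -/
import Mathlib

section
/- Let ε > ε' > 0 and ρ_k > ρ > 1 satisfy ε > ε' + 2ρ⁻¹. Then for every V ∈ 𝒱^ω_{ρ,ε} and T ∈ 𝒯^ω_{ρ_k,ε}, the commutator [V,T] := V⁻¹ ∘ T⁻¹ ∘ V ∘ T satisfies sup_{K_{ρ,ε'}} ‖[V,T] − id‖ ≤ 1/ρ'_k, where ρ'_k := ((ε − ε' − 2ρ⁻¹)/(ε − ε' − ρ⁻¹)) · ρ_k. -/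
noncomputable section

/-- `Q_{ρ,ε} := ([−ρ−ε, −1+ε] ∪ [1−ε, ρ+ε]) + i[−ρ−ε, ρ+ε] ⊂ ℂ`. -/
def Qset (ρ ε : ℝ) : Set ℂ :=
  {w : ℂ | (w.re ∈ Set.Icc (-ρ - ε) (-1 + ε) ∪ Set.Icc (1 - ε) (ρ + ε)) ∧ |w.im| ≤ ρ + ε}

/-- `K_{ρ,ε} := 𝕋_{ρ+ε} × Q_{ρ,ε}`, viewed in the universal cover `ℂ × ℂ` of `ℂ/ℤ × ℂ`:
the first coordinate ranges over `{z : |Im z| ≤ ρ+ε}` (which covers `𝕋_{ρ+ε}`). -/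
def Kset (ρ ε : ℝ) : Set (ℂ × ℂ) :=
  {z : ℂ × ℂ | |z.1.im| ≤ ρ + ε ∧ z.2 ∈ Qset ρ ε}

/-- The holomorphic extension of a horizontal twist map `(θ,y) ↦ (θ + τ(y), y)`. -/
def TwC (τ : ℂ → ℂ) : ℂ × ℂ → ℂ × ℂ := fun z => (z.1 + τ z.2, z.2)

/-- The holomorphic extension of a vertical twist map `(θ,y) ↦ (θ, y + v(θ))`. -/
def VC (v : ℂ → ℂ) : ℂ × ℂ → ℂ × ℂ := fun z => (z.1, z.2 + v z.1)

/-!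
Writing `z = (θ, y)`, `A = θ + τ y` and `y₁ = y + v A`, the commutator moves `z` by
`(τ y - τ y₁, v A - v (A - τ y₁))`. Both entries are differences of an entire function at two
points at distance at most `ρ⁻¹` (resp. `ρ_k⁻¹`), and the Cauchy estimate on a disc of radius
`ε - ε' - ρ⁻¹` (resp. `ε - ε' - 2ρ⁻¹`) around them, which still lies in the domain where the
sup bound on `τ` (resp. `v`) holds, bounds each by `1/ρ'_k`.
-/

open Metric

theorem Complex.norm_sub_le_of_norm_le_on_closedBall {F : Type*} [NormedAddCommGroup F]
    [NormedSpace ℂ F] {f : ℂ → F} (hf : Differentiable ℂ f) {a b : ℂ} {d r M : ℝ}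
    (hd : dist b a ≤ d) (hr : 0 < r) (hM : ∀ w ∈ closedBall a (d + r), ‖f w‖ ≤ M) :
    ‖f b - f a‖ ≤ M / r * d := by
  have hderiv : ∀ x ∈ segment ℝ a b, ‖deriv f x‖ ≤ M / r := by
    intro x hx
    have hxa : dist x a ≤ d :=
      (mem_closedBall.1 (segment_subset_closedBall_left a b hx)).trans
        ((dist_comm a b).trans_le hd)
    refine Complex.norm_deriv_le_of_forall_mem_sphere_norm_le hr hf.diffContOnCl fun w hw => ?_
    refine hM w (mem_closedBall.2 ?_)
    calc dist w a ≤ dist w x + dist x a := dist_triangle _ _ _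
      _ ≤ d + r := by rw [mem_sphere.1 hw]; linarith
  have hM0 : 0 ≤ M :=
    (norm_nonneg _).trans (hM a (mem_closedBall_self (by linarith [dist_nonneg (x := b) (y := a)])))
  calc ‖f b - f a‖ ≤ M / r * ‖b - a‖ :=
        (convex_segment a b).norm_image_sub_le_of_norm_deriv_le (fun x _ => hf.differentiableAt)
          hderiv (left_mem_segment ℝ a b) (right_mem_segment ℝ a b)
    _ ≤ M / r * d := by
      rw [← dist_eq_norm]
      exact mul_le_mul_of_nonneg_left hd (div_nonneg hM0 hr.le)

theorem Complex.abs_im_le_abs_im_add_dist (w a : ℂ) : |w.im| ≤ |a.im| + dist w a := by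
  have h := Complex.abs_im_le_norm (w - a)
  rw [Complex.sub_im, ← dist_eq_norm] at h
  linarith [abs_sub_abs_le_abs_sub w.im a.im]

theorem closedBall_subset_Qset {ρ ρk ε ε' : ℝ} (hρ : ρ ≤ ρk) {y : ℂ} (hy : y ∈ Qset ρ ε') :
    closedBall y (ε - ε') ⊆ Qset ρk ε := by
  intro w hw
  obtain ⟨hyre, hyim⟩ := hy
  have hwy : ‖w - y‖ ≤ ε - ε' := by rw [← dist_eq_norm]; exact mem_closedBall.1 hw
  have hre := (Complex.abs_re_le_norm (w - y)).trans hwy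
  have him := (Complex.abs_im_le_norm (w - y)).trans hwy
  rw [Complex.sub_re, abs_le] at hre
  rw [Complex.sub_im, abs_le] at him
  rw [abs_le] at hyim
  refine ⟨?_, abs_le.2 ⟨by linarith, by linarith⟩⟩
  rcases hyre with ⟨h₁, h₂⟩ | ⟨h₁, h₂⟩
  · exact Or.inl ⟨by linarith, by linarith⟩
  · exact Or.inr ⟨by linarith, by linarith⟩

theorem VC_neg_comp_TwC_neg_comp_VC_comp_TwC_sub_self (v τ : ℂ → ℂ) (θ y : ℂ) :
    (VC (fun w => -v w) ∘ TwC (fun w => -τ w) ∘ VC v ∘ TwC τ) (θ, y) - (θ, y) =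
      (τ y - τ (y + v (θ + τ y)),
        v (θ + τ y) - v (θ + τ y - τ (y + v (θ + τ y)))) := by
  simp only [VC, TwC, Function.comp_apply, Prod.mk_sub_mk, Prod.mk.injEq, ← sub_eq_add_neg]
  constructor <;> ring

theorem max_div_mul_le_inv_div_mul {a s R : ℝ} (hs : 0 ≤ s) (hR : 0 < R) (ha : 2 * s < a) :
    max (R⁻¹ / (a - s) * s) (s / (a - 2 * s) * R⁻¹) ≤ ((a - 2 * s) / (a - s) * R)⁻¹ := by
  have hR' : 0 < R⁻¹ := inv_pos.2 hR
  have hRHS : ((a - 2 * s) / (a - s) * R)⁻¹ = R⁻¹ * (a - s) / (a - 2 * s) := by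
    field_simp
  rw [hRHS]
  refine max_le ?_ ?_
  · rw [div_mul_eq_mul_div, div_le_div_iff₀ (by linarith) (by linarith)]
    have key : s * (a - 2 * s) ≤ (a - s) * (a - s) := by nlinarith [sq_nonneg (a - 3 / 2 * s)]
    linarith [mul_le_mul_of_nonneg_left key hR'.le]
  · rw [div_mul_eq_mul_div, mul_comm s]
    gcongr
    linarith

theorem stmt13_general (ε ε' ρ ρk : ℝ)
    (hρ : 1 < ρ) (hρk : ρ < ρk)
    (hgap : ε' + 2 * ρ⁻¹ < ε)
    (v τ : ℂ → ℂ)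
    (hv : Differentiable ℂ v)
    (hvsup : ∀ z : ℂ, |z.im| ≤ ρ + ε → ‖v z‖ < ρ⁻¹)
    (hτ : Differentiable ℂ τ)
    (hτsup : ∀ w ∈ Qset ρk ε, ‖τ w‖ < ρk⁻¹) :
    ∀ z ∈ Kset ρ ε',
      ‖(VC (fun w => -v w) ∘ TwC (fun w => -τ w) ∘ VC v ∘ TwC τ) z - z‖
        ≤ ((ε - ε' - 2 * ρ⁻¹) / (ε - ε' - ρ⁻¹) * ρk)⁻¹ := by
  rintro ⟨θ, y⟩ ⟨hθ, hy⟩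
  have hρ0 : 0 < ρ := by linarith
  have hs : 0 < ρ⁻¹ := inv_pos.2 hρ0
  have hinv : ρk⁻¹ < ρ⁻¹ := inv_strictAnti₀ hρ0 hρk
  have hτ_near : ∀ w ∈ closedBall y (ε - ε'), ‖τ w‖ ≤ ρk⁻¹ :=
    fun w hw => (hτsup w (closedBall_subset_Qset hρk.le hy hw)).le
  set A := θ + τ y
  set y₁ := y + v A
  have hτy : dist A θ ≤ ρk⁻¹ := by
    simpa [A, dist_eq_norm] using hτ_near y (mem_closedBall_self (by linarith))
  have hvA : dist y₁ y ≤ ρ⁻¹ := by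
    simpa [y₁, dist_eq_norm] using (hvsup A (by linarith [A.abs_im_le_abs_im_add_dist θ])).le
  have hτy₁ : dist (A - τ y₁) A ≤ ρk⁻¹ := by
    simpa [dist_eq_norm] using hτ_near y₁ (mem_closedBall.2 (by linarith))
  have h₁ : ‖τ y₁ - τ y‖ ≤ ρk⁻¹ / (ε - ε' - ρ⁻¹) * ρ⁻¹ :=
    Complex.norm_sub_le_of_norm_le_on_closedBall hτ hvA (by linarith)
      (fun w hw => hτ_near w (by simpa using hw))
  have h₂ : ‖v (A - τ y₁) - v A‖ ≤ ρ⁻¹ / (ε - ε' - 2 * ρ⁻¹) * ρk⁻¹ :=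
    Complex.norm_sub_le_of_norm_le_on_closedBall hv hτy₁ (by linarith) fun w hw =>
      (hvsup w (by linarith [w.abs_im_le_abs_im_add_dist A, A.abs_im_le_abs_im_add_dist θ,
        mem_closedBall.1 hw])).le
  rw [VC_neg_comp_TwC_neg_comp_VC_comp_TwC_sub_self, Prod.norm_def, norm_sub_rev,
    norm_sub_rev (v A)]
  exact (max_le_max h₁ h₂).trans
    (max_div_mul_le_inv_div_mul hs.le (hρ0.trans hρk) (by linarith))

/-- Let `ε > ε' > 0` and `ρ_k > ρ > 1` satisfy `ε > ε' + 2ρ⁻¹`. Then for every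
`V ∈ 𝒱^ω_{ρ,ε}` (vertical twist whose entire `v` is real on reals, `1`-periodic, of zero mean
and with `sup_{𝕋_{ρ+ε}} |v| < ρ⁻¹`) and every `T ∈ 𝒯^ω_{ρ_k,ε}` (horizontal twist whose
entire `τ` is real on reals with `sup_{Q_{ρ_k,ε}} |τ| < ρ_k⁻¹`), the commutator
`[V,T] := V⁻¹ ∘ T⁻¹ ∘ V ∘ T` satisfies `sup_{K_{ρ,ε'}} ‖[V,T] − id‖ ≤ 1/ρ'_k`, where
`ρ'_k := ((ε − ε' − 2ρ⁻¹)/(ε − ε' − ρ⁻¹)) · ρ_k`.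
(Note `V⁻¹ = VC (−v)` and `T⁻¹ = TwC (−τ)` exactly.) -/
theorem stmt13 (ε ε' ρ ρk : ℝ)
    (hε' : 0 < ε') (hεε' : ε' < ε) (hρ : 1 < ρ) (hρk : ρ < ρk)
    (hgap : ε' + 2 * ρ⁻¹ < ε)
    (v τ : ℂ → ℂ)
    (hv : Differentiable ℂ v) (hvreal : ∀ x : ℝ, (v x).im = 0)
    (hvper : ∀ z : ℂ, v (z + 1) = v z) (hvmean : (∫ x in (0:ℝ)..1, (v x).re) = 0)
    (hvsup : ∀ z : ℂ, |z.im| ≤ ρ + ε → ‖v z‖ < ρ⁻¹)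
    (hτ : Differentiable ℂ τ) (hτreal : ∀ x : ℝ, (τ x).im = 0)
    (hτsup : ∀ w ∈ Qset ρk ε, ‖τ w‖ < ρk⁻¹) :
    ∀ z ∈ Kset ρ ε',
      ‖(VC (fun w => -v w) ∘ TwC (fun w => -τ w) ∘ VC v ∘ TwC τ) z - z‖
        ≤ ((ε - ε' - 2 * ρ⁻¹) / (ε - ε' - ρ⁻¹) * ρk)⁻¹ :=
  stmt13_general ε ε' ρ ρk hρ hρk hgap v τ hv hvsup hτ hτsup
end
end

section
/- Let ρ > 1 and ε' > 0, and set ρ'_k := 2^k · max{1/ε', ρ} for every k ≥ 1. Then for any sequence (F_k)_{k≥1} of entire real automorphisms of 𝔸 satisfying sup_{K_{ρ,ε'}} ‖F_k − id‖ < 1/ρ'_k for every k, one has sup_{K_ρ} ‖F₁ ∘ ⋯ ∘ F_n − id‖ < ρ⁻¹ for every n ≥ 1. -/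
noncomputable section

/-- Let `ρ > 1` and `ε' > 0`, and set `ρ'_k := 2^k · max{1/ε', ρ}` for `k ≥ 1`.
Then for any sequence `(F_k)_{k≥1}` of entire real automorphisms of `𝔸` (here given by their
holomorphic lifts `G k : ℂ × ℂ → ℂ × ℂ`, entire, commuting with the deck translation
`(z,w) ↦ (z+1,w)`, preserving the real points, and with entire inverses) satisfying
`sup_{K_{ρ,ε'}} ‖F_k − id‖ < 1/ρ'_k` for every `k ≥ 1`, one has
`sup_{K_ρ} ‖F₁ ∘ ⋯ ∘ F_n − id‖ < ρ⁻¹` for every `n ≥ 1`. -/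
theorem stmt14 (ρ ε' : ℝ) (hρ : 1 < ρ) (hε' : 0 < ε')
    (G Ginv : ℕ → ℂ × ℂ → ℂ × ℂ)
    (hG : ∀ k, Differentiable ℂ (G k)) (hGinv : ∀ k, Differentiable ℂ (Ginv k))
    (hper : ∀ k (z : ℂ × ℂ), G k (z.1 + 1, z.2) = ((G k z).1 + 1, (G k z).2))
    (hreal : ∀ k (p : ℝ × ℝ), ∃ q : ℝ × ℝ, G k ((p.1 : ℂ), (p.2 : ℂ)) = ((q.1 : ℂ), (q.2 : ℂ)))
    (hinv : ∀ k (z : ℂ × ℂ), Ginv k (G k z) = z ∧ G k (Ginv k z) = z)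
    (hsmall : ∀ k : ℕ, 1 ≤ k → ∀ z ∈ Kset ρ ε',
      ‖G k z - z‖ < ((2:ℝ) ^ k * max (1 / ε') ρ)⁻¹) :
    ∀ n : ℕ, 1 ≤ n → ∀ z ∈ Kset ρ 0,
      ‖((List.range n).foldr (fun k acc => G (k + 1) ∘ acc) id) z - z‖ < ρ⁻¹ := by
  set M := max (1 / ε') ρ with hMdef
  have hM0 : 0 < M := lt_of_lt_of_le (by linarith) (le_max_right _ _)
  have hMε : 1 / M ≤ ε' := by
    have h1 : 1 / ε' ≤ M := le_max_left _ _
    rw [div_le_iff₀ hM0]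
    have : (1:ℝ) = ε' * (1 / ε') := by field_simp
    nlinarith
  have hMρ : 1 / M ≤ ρ⁻¹ := by
    have : ρ ≤ M := le_max_right _ _
    rw [one_div]
    exact inv_anti₀ (by linarith) this
  -- membership lemma
  have hmem : ∀ z ∈ Kset ρ 0, ∀ w : ℂ × ℂ, ‖w - z‖ ≤ ε' → w ∈ Kset ρ ε' := by
    intro z hz w hw
    obtain ⟨h1, h2re, h2im⟩ := hz
    have e1 : ‖w.1 - z.1‖ ≤ ε' := by
      have := norm_fst_le (w - z); exact le_trans this hw
    have e2 : ‖w.2 - z.2‖ ≤ ε' := by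
      have := norm_snd_le (w - z); exact le_trans this hw
    have i1 : |w.1.im - z.1.im| ≤ ε' := by
      have := Complex.abs_im_le_norm (w.1 - z.1)
      simp only [Complex.sub_im] at this
      exact le_trans this e1
    have i2 : |w.2.im - z.2.im| ≤ ε' := by
      have := Complex.abs_im_le_norm (w.2 - z.2)
      simp only [Complex.sub_im] at this
      exact le_trans this e2
    have r2 : |w.2.re - z.2.re| ≤ ε' := by
      have := Complex.abs_re_le_norm (w.2 - z.2)
      simp only [Complex.sub_re] at this
      exact le_trans this e2
    rw [abs_le] at i1 i2 r2
    rw [abs_le] at h1 h2im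
    refine ⟨by rw [abs_le]; constructor <;> linarith, ?_, by rw [abs_le]; constructor <;> linarith⟩
    rcases h2re with h | h
    · left; simp only [Set.mem_Icc] at h ⊢; constructor <;> linarith
    · right; simp only [Set.mem_Icc] at h ⊢; constructor <;> linarith
  -- key estimate by induction
  have key : ∀ n m : ℕ, ∀ z ∈ Kset ρ 0,
      ‖((List.range n).foldr (fun k acc => G (k + m + 1) ∘ acc) id) z - z‖
        ≤ (1 / M) * ((2:ℝ) ^ m)⁻¹ * (1 - ((2:ℝ) ^ n)⁻¹) := by
    intro n
    induction n with
    | zero => intro m z hz; simp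
    | succ n ih =>
      intro m z hz
      have hrw : ((List.range (n + 1)).foldr (fun k acc => G (k + m + 1) ∘ acc) id)
          = G (m + 1) ∘ ((List.range n).foldr (fun k acc => G (k + (m + 1) + 1) ∘ acc) id) := by
        have hfun : (fun (x : ℕ) (y : ℂ × ℂ → ℂ × ℂ) => G (x.succ + m + 1) ∘ y)
            = (fun k acc => G (k + (m + 1) + 1) ∘ acc) := by
          funext x y
          have hk : x.succ + m + 1 = x + (m + 1) + 1 := by omega
          rw [hk]
        rw [List.range_succ_eq_map, List.foldr_cons, List.foldr_map]
        have h0 : 0 + m + 1 = m + 1 := by omega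
        rw [h0, hfun]
      set w := ((List.range n).foldr (fun k acc => G (k + (m + 1) + 1) ∘ acc) id) z with hw
      have ihw : ‖w - z‖ ≤ (1 / M) * ((2:ℝ) ^ (m + 1))⁻¹ * (1 - ((2:ℝ) ^ n)⁻¹) :=
        ih (m + 1) z hz
      have hpow1 : (0:ℝ) < (2:ℝ) ^ (m + 1) := by positivity
      have hpown : (0:ℝ) < ((2:ℝ) ^ n)⁻¹ := by positivity
      have hpowle : ((2:ℝ) ^ (m + 1))⁻¹ ≤ 1 := by
        rw [inv_le_one_iff₀]; right; exact one_le_pow₀ (by norm_num)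
      have hpownle : ((2:ℝ) ^ n)⁻¹ ≤ 1 := by
        rw [inv_le_one_iff₀]; right; exact one_le_pow₀ (by norm_num)
      have h1M : 0 < 1 / M := by positivity
      have hwz : ‖w - z‖ ≤ ε' := by
        refine le_trans ihw (le_trans ?_ hMε)
        calc (1 / M) * ((2:ℝ) ^ (m + 1))⁻¹ * (1 - ((2:ℝ) ^ n)⁻¹)
            = (1 / M) * (((2:ℝ) ^ (m + 1))⁻¹ * (1 - ((2:ℝ) ^ n)⁻¹)) := by ring
          _ ≤ (1 / M) * 1 := by
              have hab : ((2:ℝ) ^ (m + 1))⁻¹ * (1 - ((2:ℝ) ^ n)⁻¹) ≤ 1 := by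
                nlinarith [inv_nonneg.2 hpow1.le]
              exact mul_le_mul_of_nonneg_left hab h1M.le
          _ = 1 / M := mul_one _
      have hwK : w ∈ Kset ρ ε' := hmem z hz w hwz
      have hs := hsmall (m + 1) (by omega) w hwK
      rw [hrw]
      have htri : ‖(G (m + 1) ∘ (List.range n).foldr (fun k acc => G (k + (m + 1) + 1) ∘ acc) id) z - z‖
          ≤ ‖G (m + 1) w - w‖ + ‖w - z‖ := by
        simp only [Function.comp_apply, ← hw]
        exact norm_sub_le_norm_sub_add_norm_sub _ _ _
      refine le_trans htri ?_
      have hsle : ‖G (m + 1) w - w‖ ≤ (1 / M) * ((2:ℝ) ^ (m + 1))⁻¹ := by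
        refine le_of_lt (lt_of_lt_of_le hs (le_of_eq ?_))
        rw [mul_inv, one_div, mul_comm]
      have expand : (1 / M) * ((2:ℝ) ^ (m + 1))⁻¹ + (1 / M) * ((2:ℝ) ^ (m + 1))⁻¹ * (1 - ((2:ℝ) ^ n)⁻¹)
          = (1 / M) * ((2:ℝ) ^ m)⁻¹ * (1 - ((2:ℝ) ^ (n + 1))⁻¹) := by
        have e1 : ((2:ℝ) ^ (m + 1))⁻¹ = ((2:ℝ) ^ m)⁻¹ / 2 := by
          rw [pow_succ]; field_simp
        have e2 : ((2:ℝ) ^ (n + 1))⁻¹ = ((2:ℝ) ^ n)⁻¹ / 2 := by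
          rw [pow_succ]; field_simp
        rw [e1, e2]; ring
      linarith [add_le_add hsle ihw]
  intro n hn z hz
  have h := key n 0 z hz
  simp only [Nat.add_zero] at h
  have hpown : (0:ℝ) < ((2:ℝ) ^ n)⁻¹ := by positivity
  have h1M : 0 < 1 / M := by positivity
  calc ‖((List.range n).foldr (fun k acc => G (k + 1) ∘ acc) id) z - z‖
      ≤ (1 / M) * ((2:ℝ) ^ 0)⁻¹ * (1 - ((2:ℝ) ^ n)⁻¹) := h
    _ < 1 / M := by
        simp only [pow_zero, inv_one, mul_one]
        nlinarith [mul_pos h1M hpown]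
    _ ≤ ρ⁻¹ := hMρ
end
end
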